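/- The three-point Virasoro algebra V = W \oplus C c_1 \oplus C c_2, with W the three-point Witt algebra and brackets [d_m, d_n] = (n-m)(d_{m+n+1} + 4 d_{m+n}) + \phi_1(d_m,d_n) c_1 + \phi_2(d_m,d_n) c_2 (and similarly for the other pairs), with c_1, c_2 central, is a Lie algebra (the Jacobi identity holds). -/

import Mathlib

/-!
Both identities are multilinear, so it suffices to check them on basis vectors. The central
vectors `c₁, c₂` bracket to zero with everything, and the Jacobi identity is cyclically
symmetric, so only triples of types `(d,d,d)`, `(d,d,d¹)`, `(d,d¹,d¹)`, `(d¹,d¹,d¹)` remain.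
There the coefficients of `d` and `d¹` are polynomial identities in the indices (the Jacobi
identity of the Witt algebra), and those of `c₁, c₂` are the cocycle conditions; the ones for
`φ₂` follow from those for `φ₁`, since `φ₂` is `-2φ₁` on the diagonal blocks and `0` on the
mixed one. The `δ`-terms of `φ₁` reduce its cocycle conditions to finitely many values of the
index sum. The mixed term is `φ₁(d¹_k, d_l) = (k-1)k l · C(k+l)`, where `C` satisfies the
recurrence `(t+2) C(t+1) = -2(2t-1) C(t)`, which is exactly what the `(d,d,d¹)` condition needs.
-/

/-- Basis index for the three-point Virasoro algebra: `Sum.inl (false, n) ↔ d_n`,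
`Sum.inl (true, n) ↔ d¹_n`, `Sum.inr false ↔ c₁`, `Sum.inr true ↔ c₂`. -/
abbrev VirIdx : Type := (Bool × ℤ) ⊕ Bool

/-- The underlying space of the three-point Virasoro algebra. -/
abbrev VirV : Type := VirIdx →₀ ℂ

noncomputable def eV (p : VirIdx) : VirV := Finsupp.single p 1

/-- The odd double factorial `j‼` extended to negative odd integers by the
convention `(-2k-1)‼ = (-1)ᵏ/(2k-1)‼`. -/
noncomputable def oddDF (j : ℤ) : ℂ :=
  if -1 ≤ j then (Nat.doubleFactorial j.toNat : ℂ)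
  else (-1) ^ ((-j - 1) / 2).toNat / (Nat.doubleFactorial (-j - 2).toNat : ℂ)

/-- `1/j!`, extended by `0` for negative `j`. -/
noncomputable def invFact (j : ℤ) : ℂ :=
  if 0 ≤ j then ((j.toNat).factorial : ℂ)⁻¹ else 0

/-- `φ₁(d¹_k, d_l) = 6(-1)^{k+l} 2^{k+l} (k-1)k l (2k+2l-3)‼/(k+l+1)!`. -/
noncomputable def phiMix (k l : ℤ) : ℂ :=
  6 * (-1 : ℂ) ^ (k + l) * (2 : ℂ) ^ (k + l) * ((k : ℂ) - 1) * k * l *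
    oddDF (2 * k + 2 * l - 3) * invFact (k + l + 1)

/-- The cocycle `φ₁` on basis elements. -/
noncomputable def phiBasis : Bool × ℤ → Bool × ℤ → ℂ
  | (true, k), (true, l) =>
      (if k + l = 1 then 2 * ((l : ℂ) ^ 2 - l) * (2 * l - 1) else 0) +
        (if k + l = 0 then (l : ℂ) ^ 3 - l else 0)
  | (true, k), (false, l) => phiMix k l
  | (false, k), (true, l) => -phiMix l k
  | (false, k), (false, l) =>
      (if k + l = -2 then (l : ℂ) * (l + 1) * (l + 2) else 0) +
        (if k + l = -1 then 4 * (l : ℂ) * (2 * l + 1) * (l + 1) else 0) +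
          (if k + l = 0 then 4 * (l : ℂ) * (2 * l - 1) * (2 * l + 1) else 0)

/-- The cocycle `φ₂`: `-2φ₁` on the diagonal blocks and `0` on the mixed block. -/
noncomputable def phi2Basis (p q : Bool × ℤ) : ℂ :=
  if p.1 = q.1 then -2 * phiBasis p q else 0

/-- The three-point Witt bracket on basis elements, valued in `VirV`. -/
noncomputable def brWBasis : Bool × ℤ → Bool × ℤ → VirV
  | (false, m), (false, n) =>
      ((n : ℂ) - m) • (eV (Sum.inl (false, m + n + 1)) +
        (4 : ℂ) • eV (Sum.inl (false, m + n)))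
  | (true, m), (true, n) => ((n : ℂ) - m) • eV (Sum.inl (false, m + n - 1))
  | (false, m), (true, n) =>
      ((n : ℂ) - m - 1) • eV (Sum.inl (true, m + n + 1)) +
        (4 * (n : ℂ) - 4 * m - 2) • eV (Sum.inl (true, m + n))
  | (true, m), (false, n) =>
      -(((m : ℂ) - n - 1) • eV (Sum.inl (true, n + m + 1)) +
        (4 * (m : ℂ) - 4 * n - 2) • eV (Sum.inl (true, n + m)))

/-- The three-point Virasoro bracket on basis elements: Witt bracket plus central
terms `φ₁ c₁ + φ₂ c₂`; `c₁` and `c₂` are central. -/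
noncomputable def brVBasis : VirIdx → VirIdx → VirV
  | Sum.inl p, Sum.inl q =>
      brWBasis p q + phiBasis p q • eV (Sum.inr false) + phi2Basis p q • eV (Sum.inr true)
  | _, _ => 0

/-- The three-point Virasoro bracket, extended bilinearly. -/
noncomputable def brV : VirV →ₗ[ℂ] VirV →ₗ[ℂ] VirV :=
  Finsupp.lift (VirV →ₗ[ℂ] VirV) ℂ VirIdx fun p =>
    Finsupp.lift VirV ℂ VirIdx fun q => brVBasis p q

section FreeModule

variable {ι R M : Type*} [CommRing R] [AddCommGroup M] [Module R M]

open Finsupp in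
lemma skew_of_single (B : (ι →₀ R) →ₗ[R] (ι →₀ R) →ₗ[R] M)
    (h : ∀ p q, B (single p 1) (single q 1) = -B (single q 1) (single p 1)) (x y : ι →₀ R) :
    B x y = -B y x := by
  have hB : B = -B.flip := by ext p q; simpa using h p q
  simpa using LinearMap.congr_fun₂ hB x y

def jacobiator (B : M →ₗ[R] M →ₗ[R] M) (x y z : M) : M :=
  B (B x y) z + B (B y z) x + B (B z x) y

lemma jacobiator_rotate (B : M →ₗ[R] M →ₗ[R] M) (x y z : M) :
    jacobiator B x y z = jacobiator B y z x := by
  simp only [jacobiator]; abel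

lemma jacobiator_eq_zero_of_left_eq_zero (B : M →ₗ[R] M →ₗ[R] M)
    (hB : ∀ x y, B x y = -B y x) {c : M} (hc : B c = 0) (y z : M) : jacobiator B c y z = 0 := by
  simp [jacobiator, hc, hB _ c]

open Finsupp in
lemma jacobiator_eq_zero_of_single
    (B : (ι →₀ R) →ₗ[R] (ι →₀ R) →ₗ[R] (ι →₀ R))
    (h : ∀ p q r, jacobiator B (single p 1) (single q 1) (single r 1) = 0) (x y z : ι →₀ R) :
    jacobiator B x y z = 0 := by
  induction x using Finsupp.induction_linear with
  | zero => simp [jacobiator]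
  | add x₁ x₂ h₁ h₂ =>
    simp only [jacobiator, map_add, LinearMap.add_apply] at h₁ h₂ ⊢
    linear_combination (norm := module) h₁ + h₂
  | single p a =>
    induction y using Finsupp.induction_linear with
    | zero => simp [jacobiator]
    | add y₁ y₂ h₁ h₂ =>
      simp only [jacobiator, map_add, LinearMap.add_apply] at h₁ h₂ ⊢
      linear_combination (norm := module) h₁ + h₂
    | single q b =>
      induction z using Finsupp.induction_linear with
      | zero => simp [jacobiator]
      | add z₁ z₂ h₁ h₂ =>
        simp only [jacobiator, map_add, LinearMap.add_apply] at h₁ h₂ ⊢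
        linear_combination (norm := module) h₁ + h₂
      | single r c =>
        have hpqr := h p q r
        rw [← smul_single_one p a, ← smul_single_one q b, ← smul_single_one r c]
        simp only [jacobiator, map_smul, LinearMap.smul_apply] at hpqr ⊢
        linear_combination (norm := module) (a * b * c) • hpqr

end FreeModule

lemma invFact_of_neg {j : ℤ} (hj : j < 0) : invFact j = 0 := if_neg (by omega)

lemma invFact_succ (j : ℤ) : ((j : ℂ) + 1) * invFact (j + 1) = invFact j := by
  rcases lt_or_ge j 0 with hj | hj
  · obtain rfl | hj' := show j = -1 ∨ j < -1 by omega
    · norm_num [invFact]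
    · rw [invFact_of_neg hj, invFact_of_neg (by omega), mul_zero]
  · lift j to ℕ using hj
    simp only [invFact, Int.toNat_natCast, if_pos (by omega : (0 : ℤ) ≤ j + 1),
      if_pos (Int.natCast_nonneg j), show ((j : ℤ) + 1).toNat = j + 1 by omega]
    push_cast [Nat.factorial_succ]
    field_simp

lemma oddDF_two_mul_sub_one {t : ℤ} (ht : -1 ≤ t) :
    oddDF (2 * t - 1) = (2 * t - 1) * oddDF (2 * t - 3) := by
  obtain rfl | rfl | rfl | ht := show t = -1 ∨ t = 0 ∨ t = 1 ∨ 2 ≤ t by omega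
  · norm_num [oddDF, show (2 : ℤ).toNat = 2 from rfl, show (3 : ℤ).toNat = 3 from rfl]
  · norm_num [oddDF, show (-1 : ℤ).toNat = 0 from rfl]
  · norm_num [oddDF, show (-1 : ℤ).toNat = 0 from rfl]
  · obtain ⟨m, hm⟩ : ∃ m : ℕ, (m : ℤ) = 2 * t - 3 :=
      ⟨(2 * t - 3).toNat, Int.toNat_of_nonneg (by omega)⟩
    have hmC : (m : ℂ) = 2 * t - 3 := by exact_mod_cast hm
    simp only [oddDF, if_pos (by omega : -1 ≤ 2 * t - 1), if_pos (by omega : -1 ≤ 2 * t - 3),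
      show (2 * t - 1).toNat = m + 2 by omega, show (2 * t - 3).toNat = m by omega,
      Nat.doubleFactorial_add_two]
    push_cast
    rw [hmC]
    ring

noncomputable def mixFactor (t : ℤ) : ℂ :=
  6 * (-1) ^ t * 2 ^ t * oddDF (2 * t - 3) * invFact (t + 1)

lemma phiMix_eq_mul_mixFactor (k l : ℤ) :
    phiMix k l = ((k : ℂ) - 1) * k * l * mixFactor (k + l) := by
  rw [phiMix, mixFactor, show 2 * (k + l) - 3 = 2 * k + 2 * l - 3 by ring]
  ring

lemma mixFactor_of_le {t : ℤ} (ht : t ≤ -2) : mixFactor t = 0 := by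
  rw [mixFactor, invFact_of_neg (by omega), mul_zero]

lemma mixFactor_succ (t : ℤ) :
    ((t : ℂ) + 2) * mixFactor (t + 1) = -2 * (2 * t - 1) * mixFactor t := by
  obtain rfl | ht | ht := show t = -2 ∨ t < -2 ∨ -1 ≤ t by omega
  · rw [mixFactor_of_le le_rfl]; push_cast; ring
  · rw [mixFactor_of_le ht.le, mixFactor_of_le (by omega)]; ring
  · have hfact := invFact_succ (t + 1)
    push_cast at hfact
    rw [mixFactor, mixFactor, show 2 * (t + 1) - 3 = 2 * t - 1 by ring,
      oddDF_two_mul_sub_one ht, zpow_add_one₀ (by norm_num), zpow_add_one₀ (by norm_num)]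
    linear_combination (-12 * (2 * (t : ℂ) - 1) * (-1) ^ t * 2 ^ t * oddDF (2 * t - 3)) * hfact

lemma mixFactor_succ_eq_div {t : ℤ} (ht : t ≠ -2) :
    mixFactor (t + 1) = -2 * (2 * t - 1) / (t + 2) * mixFactor t := by
  have ht' : (t : ℂ) + 2 ≠ 0 := by exact_mod_cast (show t + 2 ≠ 0 by omega)
  rw [div_mul_eq_mul_div, eq_div_iff ht', mul_comm, mixFactor_succ]

lemma phiBasis_cocycle_ddd (m n k : ℤ) :
    ((n : ℂ) - m) *
        (phiBasis (false, m + n + 1) (false, k) + 4 * phiBasis (false, m + n) (false, k)) +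
    ((k : ℂ) - n) *
        (phiBasis (false, n + k + 1) (false, m) + 4 * phiBasis (false, n + k) (false, m)) +
    ((m : ℂ) - k) *
        (phiBasis (false, k + m + 1) (false, n) + 4 * phiBasis (false, k + m) (false, n)) = 0 := by
  rcases show k = -3 - m - n ∨ k = -2 - m - n ∨ k = -1 - m - n ∨ k = -m - n ∨
      m + n + k < -3 ∨ 0 < m + n + k by omega with rfl | rfl | rfl | rfl | hs | hs <;>
  simp (disch := omega) only [phiBasis, if_pos, if_neg] <;> push_cast <;> ring

lemma phiBasis_cocycle_ddd₁ (m n k : ℤ) :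
    ((n : ℂ) - m) *
        (phiBasis (false, m + n + 1) (true, k) + 4 * phiBasis (false, m + n) (true, k)) +
    (((k : ℂ) - n - 1) * phiBasis (true, n + k + 1) (false, m) +
      (4 * k - 4 * n - 2) * phiBasis (true, n + k) (false, m)) -
    (((k : ℂ) - m - 1) * phiBasis (true, m + k + 1) (false, n) +
      (4 * k - 4 * m - 2) * phiBasis (true, m + k) (false, n)) = 0 := by
  obtain ⟨s, rfl⟩ : ∃ s, k = s - m - n := ⟨m + n + k, by ring⟩
  simp only [phiBasis, phiMix_eq_mul_mixFactor]
  rw [show s - m - n + (m + n + 1) = s + 1 by ring, show n + (s - m - n) + 1 + m = s + 1 by ring,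
    show m + (s - m - n) + 1 + n = s + 1 by ring, show s - m - n + (m + n) = s by ring,
    show n + (s - m - n) + m = s by ring, show m + (s - m - n) + n = s by ring]
  obtain rfl | hs := eq_or_ne s (-2)
  · rw [mixFactor_of_le le_rfl]; push_cast; ring
  · have hs' : (s : ℂ) + 2 ≠ 0 := by exact_mod_cast (show s + 2 ≠ 0 by omega)
    rw [mixFactor_succ_eq_div hs]
    field_simp
    push_cast
    ring

lemma phiBasis_cocycle_dd₁d₁ (m n k : ℤ) :
    (((n : ℂ) - m - 1) * phiBasis (true, m + n + 1) (true, k) +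
      (4 * n - 4 * m - 2) * phiBasis (true, m + n) (true, k)) +
    ((k : ℂ) - n) * phiBasis (false, n + k - 1) (false, m) -
    (((k : ℂ) - m - 1) * phiBasis (true, m + k + 1) (true, n) +
      (4 * k - 4 * m - 2) * phiBasis (true, m + k) (true, n)) = 0 := by
  rcases show k = 1 - m - n ∨ k = -m - n ∨ k = -1 - m - n ∨
      m + n + k < -1 ∨ 1 < m + n + k by omega with rfl | rfl | rfl | hs | hs <;>
  simp (disch := omega) only [phiBasis, if_pos, if_neg] <;> push_cast <;> ring

lemma phiBasis_cocycle_d₁d₁d₁ (m n k : ℤ) :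
    ((n : ℂ) - m) * phiBasis (false, m + n - 1) (true, k) +
    ((k : ℂ) - n) * phiBasis (false, n + k - 1) (true, m) +
    ((m : ℂ) - k) * phiBasis (false, k + m - 1) (true, n) = 0 := by
  simp only [phiBasis, phiMix_eq_mul_mixFactor]
  rw [show k + (m + n - 1) = m + n + k - 1 by ring, show m + (n + k - 1) = m + n + k - 1 by ring,
    show n + (k + m - 1) = m + n + k - 1 by ring]
  push_cast
  ring

lemma phiBasis_skew (p q : Bool × ℤ) : phiBasis p q = -phiBasis q p := by
  obtain ⟨_ | _, k⟩ := p <;> obtain ⟨_ | _, l⟩ := q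
  · rcases show l = -2 - k ∨ l = -1 - k ∨ l = -k ∨ k + l < -2 ∨ 0 < k + l by omega with
      rfl | rfl | rfl | h | h <;>
    simp (disch := omega) only [phiBasis, if_pos, if_neg] <;> push_cast <;> ring
  · rfl
  · exact (neg_neg _).symm
  · rcases show l = 1 - k ∨ l = -k ∨ k + l < 0 ∨ 1 < k + l by omega with
      rfl | rfl | h | h <;>
    simp (disch := omega) only [phiBasis, if_pos, if_neg] <;> push_cast <;> ring

lemma phi2Basis_of_fst_eq {p q : Bool × ℤ} (h : p.1 = q.1) :
    phi2Basis p q = -2 * phiBasis p q :=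
  if_pos h

lemma phi2Basis_of_fst_ne {p q : Bool × ℤ} (h : p.1 ≠ q.1) : phi2Basis p q = 0 :=
  if_neg h

lemma phi2Basis_skew (p q : Bool × ℤ) : phi2Basis p q = -phi2Basis q p := by
  by_cases h : p.1 = q.1
  · rw [phi2Basis_of_fst_eq h, phi2Basis_of_fst_eq h.symm, phiBasis_skew p q]; ring
  · rw [phi2Basis_of_fst_ne h, phi2Basis_of_fst_ne (Ne.symm h), neg_zero]

local notation "𝐝" n:max => eV (Sum.inl (false, n))
local notation "𝐝¹" n:max => eV (Sum.inl (true, n))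

lemma brV_eV (p q : VirIdx) : brV (eV p) (eV q) = brVBasis p q := by
  simp [brV, eV]

lemma brVBasis_inr_left (b : Bool) (q : VirIdx) : brVBasis (Sum.inr b) q = 0 := by
  cases q <;> rfl

lemma brVBasis_inr_right (b : Bool) (p : VirIdx) : brVBasis p (Sum.inr b) = 0 := by
  cases p <;> rfl

lemma brWBasis_skew (p q : Bool × ℤ) : brWBasis p q = -brWBasis q p := by
  obtain ⟨_ | _, m⟩ := p <;> obtain ⟨_ | _, n⟩ := q <;>
    simp only [brWBasis, neg_neg, add_comm n m] <;> module

lemma brVBasis_skew (p q : VirIdx) : brVBasis p q = -brVBasis q p := by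
  rcases p with p | _ <;> rcases q with q | _
  · simp only [brVBasis, brWBasis_skew p q, phiBasis_skew p q, phi2Basis_skew p q]
    module
  all_goals simp only [brVBasis_inr_left, brVBasis_inr_right, neg_zero]

lemma brV_skew (x y : VirV) : brV x y = -brV y x :=
  skew_of_single brV (fun p q ↦ by rw [← eV, ← eV, brV_eV, brV_eV, brVBasis_skew]) x y

lemma jacobiator_ddd (m n k : ℤ) : jacobiator brV (𝐝 m) (𝐝 n) (𝐝 k) = 0 := by
  simp only [jacobiator, brV_eV, brVBasis, brWBasis, map_add, map_smul, LinearMap.add_apply,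
    LinearMap.smul_apply, smul_add, smul_zero, add_zero]
  rw [show m + n + 1 + k + 1 = m + n + k + 2 by ring,
    show n + k + 1 + m + 1 = m + n + k + 2 by ring, show k + m + 1 + n + 1 = m + n + k + 2 by ring,
    show m + n + 1 + k = m + n + k + 1 by ring, show n + k + 1 + m = m + n + k + 1 by ring, show k + m + 1 + n = m + n + k + 1 by ring,
    show n + k + m + 1 = m + n + k + 1 by ring, show k + m + n + 1 = m + n + k + 1 by ring,
    show n + k + m = m + n + k by ring, show k + m + n = m + n + k by ring]
  have hφ := phiBasis_cocycle_ddd m n k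
  -- one goal per basis vector: `d_{s+2}`, `d_{s+1}`, `c₁`, `c₂`, `d_s`, where `s = m + n + k`
  match_scalars
  · ring
  · ring
  · linear_combination hφ
  · simp only [phi2Basis_of_fst_eq]; linear_combination -2 * hφ
  · ring

lemma jacobiator_ddd₁ (m n k : ℤ) : jacobiator brV (𝐝 m) (𝐝 n) (𝐝¹ k) = 0 := by
  simp only [jacobiator, brV_eV, brVBasis, brWBasis, map_add, map_smul, map_neg,
    LinearMap.add_apply, LinearMap.smul_apply, LinearMap.neg_apply, smul_add, smul_zero, add_zero]
  rw [show m + n + 1 + k + 1 = m + n + k + 2 by ring,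
    show m + (n + k + 1) + 1 = m + n + k + 2 by ring,
    show n + (m + k + 1) + 1 = m + n + k + 2 by ring, show m + n + 1 + k = m + n + k + 1 by ring,
    show m + (n + k + 1) = m + n + k + 1 by ring, show m + (n + k) = m + n + k by ring,
    show n + (m + k + 1) = m + n + k + 1 by ring, show n + (m + k) = m + n + k by ring]
  have hφ := phiBasis_cocycle_ddd₁ m n k
  match_scalars
  · ring
  · ring
  · linear_combination hφ
  · simp (disch := simp) only [phi2Basis_of_fst_ne]; ring
  · ring

lemma jacobiator_dd₁d₁ (m n k : ℤ) : jacobiator brV (𝐝 m) (𝐝¹ n) (𝐝¹ k) = 0 := by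
  simp only [jacobiator, brV_eV, brVBasis, brWBasis, map_add, map_smul, map_neg,
    LinearMap.add_apply, LinearMap.smul_apply, LinearMap.neg_apply, smul_add, smul_zero, add_zero]
  rw [show m + n + 1 + k - 1 = m + n + k by ring, show n + k - 1 + m = m + n + k - 1 by ring,
    show m + k + 1 + n - 1 = m + n + k by ring, show m + k + n - 1 = m + n + k - 1 by ring,
    show m + n + k - 1 + 1 = m + n + k by ring]
  have hφ := phiBasis_cocycle_dd₁d₁ m n k
  match_scalars
  · ring
  · linear_combination hφ
  · simp only [phi2Basis_of_fst_eq]; linear_combination -2 * hφ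
  · ring

lemma jacobiator_d₁d₁d₁ (m n k : ℤ) : jacobiator brV (𝐝¹ m) (𝐝¹ n) (𝐝¹ k) = 0 := by
  simp only [jacobiator, brV_eV, brVBasis, brWBasis, map_add, map_smul, LinearMap.add_apply,
    LinearMap.smul_apply, smul_add, smul_zero, add_zero]
  rw [show m + n - 1 + k = m + n + k - 1 by ring, show n + k - 1 + m = m + n + k - 1 by ring,
    show k + m - 1 + n = m + n + k - 1 by ring, show m + n + k - 1 + 1 = m + n + k by ring]
  have hφ := phiBasis_cocycle_d₁d₁d₁ m n k
  match_scalars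
  · ring
  · ring
  · linear_combination hφ
  · simp (disch := simp) only [phi2Basis_of_fst_ne]; ring

lemma brV_eV_inr (b : Bool) : brV (eV (Sum.inr b)) = 0 :=
  Finsupp.lhom_ext fun q c ↦ by
    rw [← Finsupp.smul_single_one, map_smul, ← eV, brV_eV, brVBasis_inr_left, smul_zero,
      LinearMap.zero_apply]

lemma jacobiator_brV_eV (p q r : VirIdx) : jacobiator brV (eV p) (eV q) (eV r) = 0 := by
  have central (b : Bool) (y z : VirV) : jacobiator brV (eV (.inr b)) y z = 0 :=
    jacobiator_eq_zero_of_left_eq_zero brV brV_skew (brV_eV_inr b) y z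
  rcases p with ⟨a, m⟩ | b
  · rcases q with ⟨a', n⟩ | b
    · rcases r with ⟨a'', k⟩ | b
      · cases a <;> cases a' <;> cases a''
        · exact jacobiator_ddd m n k
        · exact jacobiator_ddd₁ m n k
        · rw [jacobiator_rotate, jacobiator_rotate]; exact jacobiator_ddd₁ k m n
        · exact jacobiator_dd₁d₁ m n k
        · rw [jacobiator_rotate]; exact jacobiator_ddd₁ n k m
        · rw [jacobiator_rotate]; exact jacobiator_dd₁d₁ n k m
        · rw [jacobiator_rotate, jacobiator_rotate]; exact jacobiator_dd₁d₁ k m n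
        · exact jacobiator_d₁d₁d₁ m n k
      · rw [jacobiator_rotate, jacobiator_rotate]; exact central b _ _
    · rw [jacobiator_rotate]; exact central b _ _
  · exact central b _ _

/-- the three-point Virasoro algebra `V = W ⊕ ℂc₁ ⊕ ℂc₂`, with the
Witt bracket corrected by the cocycles `φ₁, φ₂` and `c₁, c₂` central, is a Lie
algebra: the bracket is alternating and satisfies the Jacobi identity. -/
theorem three_point_virasoro_is_lie_algebra :
    (∀ x : VirV, brV x x = 0) ∧
    ∀ x y z : VirV,
      brV (brV x y) z + brV (brV y z) x + brV (brV z x) y = 0 :=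
  ⟨fun x ↦ self_eq_neg.mp (brV_skew x x), jacobiator_eq_zero_of_single brV jacobiator_brV_eV⟩
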